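/- If a graph G admits a perfect matching, then Dominator has a winning strategy in both the D-game and the S-game of the Maker-Breaker domination game on G; moreover, in each game Dominator wins using at most |M| moves, where M is the perfect matching. -/

import Mathlib

open SimpleGraph

namespace MBD

variable {V : Type*}

/-- Dominator's claimed set `D` is a dominating set of `G`. -/
def Dominates (G : SimpleGraph V) (D : Finset V) : Prop :=
  ∀ v : V, ∃ d ∈ D, d = v ∨ G.Adj d v

/-- Staller's claimed set `S` contains the whole closed neighborhood of some vertex. -/
def StallerWinSet (G : SimpleGraph V) (S : Finset V) : Prop :=
  ∃ v : V, ∀ u : V, (u = v ∨ G.Adj u v) → u ∈ S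

variable [DecidableEq V]

mutual
  /-- `DomD G k D S`: with Dominator having claimed `D`, Staller `S`, and Dominator to
  move, Dominator has a strategy winning the Maker-Breaker domination game on `G`
  using at most `k` further moves of his own. -/
  inductive DomD (G : SimpleGraph V) : ℕ → Finset V → Finset V → Prop
    | win {k : ℕ} {D S : Finset V} : Dominates G D → DomD G k D S
    | move {k : ℕ} {D S : Finset V} (v : V) : v ∉ D → v ∉ S →
        DomS G k (insert v D) S → DomD G (k + 1) D S
  /-- Like `DomD`, but it is Staller's turn to move. -/
  inductive DomS (G : SimpleGraph V) : ℕ → Finset V → Finset V → Prop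
    | win {k : ℕ} {D S : Finset V} : Dominates G D → DomS G k D S
    | move {k : ℕ} {D S : Finset V} : (∃ v : V, v ∉ D ∧ v ∉ S) →
        (∀ v : V, v ∉ D → v ∉ S → DomD G k D (insert v S)) → DomS G k D S
end

mutual
  /-- `StallD G k D S`: with Dominator having claimed `D`, Staller `S`, and Dominator to
  move, Staller has a strategy winning (claiming a whole closed neighborhood) within at
  most `k` further moves of her own. -/
  inductive StallD (G : SimpleGraph V) : ℕ → Finset V → Finset V → Prop
    | win {k : ℕ} {D S : Finset V} : StallerWinSet G S → StallD G k D S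
    | move {k : ℕ} {D S : Finset V} : (∃ v : V, v ∉ D ∧ v ∉ S) →
        (∀ v : V, v ∉ D → v ∉ S → StallS G k (insert v D) S) → StallD G k D S
  /-- Like `StallD`, but it is Staller's turn to move. -/
  inductive StallS (G : SimpleGraph V) : ℕ → Finset V → Finset V → Prop
    | win {k : ℕ} {D S : Finset V} : StallerWinSet G S → StallS G k D S
    | move {k : ℕ} {D S : Finset V} (v : V) : v ∉ D → v ∉ S →
        StallD G k D (insert v S) → StallS G (k + 1) D S
end

/-- Dominator has a winning strategy in the D-game (Dominator starts). -/
def DominatorWinsD (G : SimpleGraph V) : Prop := ∃ k, DomD G k ∅ ∅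

/-- Dominator has a winning strategy in the S-game (Staller starts). -/
def DominatorWinsS (G : SimpleGraph V) : Prop := ∃ k, DomS G k ∅ ∅

/-- Staller has a winning strategy in the D-game (Dominator starts). -/
def StallerWinsD (G : SimpleGraph V) : Prop := ∃ k, StallD G k ∅ ∅

/-- Staller has a winning strategy in the S-game (Staller starts). -/
def StallerWinsS (G : SimpleGraph V) : Prop := ∃ k, StallS G k ∅ ∅

/-- Outcome `𝒟`: Dominator wins both the D-game and the S-game. -/
def outcomeD (G : SimpleGraph V) : Prop := DominatorWinsD G ∧ DominatorWinsS G

/-- Outcome `𝒮`: Staller wins both the D-game and the S-game. -/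
def outcomeS (G : SimpleGraph V) : Prop := StallerWinsD G ∧ StallerWinsS G

/-- Outcome `𝒩`: the first player wins in both games. -/
def outcomeN (G : SimpleGraph V) : Prop := DominatorWinsD G ∧ StallerWinsS G

/-- `γ_MB(G)`: the minimum number of Dominator's moves needed to win the D-game,
`∞` if he has no winning strategy. -/
noncomputable def gMB (G : SimpleGraph V) : ℕ∞ :=
  sInf ((fun k : ℕ => (k : ℕ∞)) '' {k | DomD G k ∅ ∅})

/-- `γ_MB'(G)`: the minimum number of Dominator's moves needed to win the S-game. -/
noncomputable def gMB' (G : SimpleGraph V) : ℕ∞ :=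
  sInf ((fun k : ℕ => (k : ℕ∞)) '' {k | DomS G k ∅ ∅})

/-- `γ_SMB(G)`: the minimum number of Staller's moves needed to win the D-game. -/
noncomputable def gSMB (G : SimpleGraph V) : ℕ∞ :=
  sInf ((fun k : ℕ => (k : ℕ∞)) '' {k | StallD G k ∅ ∅})

/-- `γ_SMB'(G)`: the minimum number of Staller's moves needed to win the S-game. -/
noncomputable def gSMB' (G : SimpleGraph V) : ℕ∞ :=
  sInf ((fun k : ℕ => (k : ℕ∞)) '' {k | StallS G k ∅ ∅})

end MBD

/-!
Pairing strategy. Call a pair of `M` *open* while Dominator owns neither endpoint. Dominator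
keeps the invariant that, whenever Staller is to move, she owns no vertex of an open pair.
When Staller claims a vertex of an open pair, Dominator claims its partner (still free by
the invariant; disjointness keeps the other open pairs untouched); otherwise he claims a vertex
of any open pair. Either way one more pair gets closed, so after at most `|M|` moves every
pair contains a vertex of Dominator, and since the pairs are edges covering `V`, his
vertices dominate `G`.
-/

namespace MBD

variable {V : Type*} [DecidableEq V] {M : Finset (V × V)} {D D' S : Finset V}

def pairsAvoiding (M : Finset (V × V)) (D : Finset V) : Finset (V × V) :=
  M.filter fun p => p.1 ∉ D ∧ p.2 ∉ D

lemma mem_pairsAvoiding {p : V × V} :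
    p ∈ pairsAvoiding M D ↔ p ∈ M ∧ p.1 ∉ D ∧ p.2 ∉ D :=
  Finset.mem_filter

@[simp]
lemma pairsAvoiding_empty : pairsAvoiding M (∅ : Finset V) = M := by
  simp [pairsAvoiding]

lemma pairsAvoiding_anti (h : D ⊆ D') : pairsAvoiding M D' ⊆ pairsAvoiding M D := by
  intro p hp
  obtain ⟨hpM, h1, h2⟩ := mem_pairsAvoiding.1 hp
  exact mem_pairsAvoiding.2 ⟨hpM, fun h1' => h1 (h h1'), fun h2' => h2 (h h2')⟩

lemma card_pairsAvoiding_insert_lt {q : V × V} {d : V} (hq : q ∈ pairsAvoiding M D)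
    (hd : d = q.1 ∨ d = q.2) :
    (pairsAvoiding M (insert d D)).card < (pairsAvoiding M D).card := by
  refine Finset.card_lt_card (Finset.ssubset_iff_of_subset
    (pairsAvoiding_anti (Finset.subset_insert d D)) |>.2 ⟨q, hq, fun hq' => ?_⟩)
  obtain ⟨-, h1, h2⟩ := mem_pairsAvoiding.1 hq'
  rcases hd with rfl | rfl
  · exact h1 (Finset.mem_insert_self _ _)
  · exact h2 (Finset.mem_insert_self _ _)

lemma dominates_of_pairsAvoiding_eq_empty {G : SimpleGraph V}
    (hadj : ∀ p ∈ M, G.Adj p.1 p.2) (hperf : ∀ v : V, ∃ p ∈ M, v = p.1 ∨ v = p.2)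
    (h : pairsAvoiding M D = ∅) : Dominates G D := by
  intro v
  obtain ⟨p, hpM, hv⟩ := hperf v
  have hclosed : p.1 ∈ D ∨ p.2 ∈ D := by
    by_contra! hopen
    simpa [h] using mem_pairsAvoiding.2 ⟨hpM, hopen⟩
  rcases hclosed with h1 | h2 <;> rcases hv with rfl | rfl
  · exact ⟨p.1, h1, .inl rfl⟩
  · exact ⟨p.1, h1, .inr (hadj p hpM)⟩
  · exact ⟨p.2, h2, .inr (hadj p hpM).symm⟩
  · exact ⟨p.2, h2, .inl rfl⟩

def PairingInvariant (M : Finset (V × V)) (D S : Finset V) : Prop :=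
  ∀ p ∈ pairsAvoiding M D, p.1 ∉ S ∧ p.2 ∉ S

lemma pairingInvariant_empty : PairingInvariant M D ∅ :=
  fun _ _ => ⟨Finset.notMem_empty _, Finset.notMem_empty _⟩

lemma PairingInvariant.mono (h : PairingInvariant M D S) (hD : D ⊆ D') :
    PairingInvariant M D' S :=
  fun p hp => h p (pairsAvoiding_anti hD hp)

lemma exists_pairing_reply (hloop : ∀ p ∈ M, p.1 ≠ p.2)
    (hdisj : ∀ p ∈ M, ∀ q ∈ M, p ≠ q → p.1 ≠ q.1 ∧ p.1 ≠ q.2 ∧ p.2 ≠ q.1 ∧ p.2 ≠ q.2)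
    (hinv : PairingInvariant M D S) (hopen : (pairsAvoiding M D).Nonempty) (v : V) :
    ∃ q ∈ pairsAvoiding M D, ∃ d, (d = q.1 ∨ d = q.2) ∧ d ∉ insert v S ∧
      PairingInvariant M (insert d D) (insert v S) := by
  by_cases hv : ∃ q ∈ pairsAvoiding M D, v = q.1 ∨ v = q.2
  · obtain ⟨q, hq, hvq⟩ := hv
    have hqM := (mem_pairsAvoiding.1 hq).1
    -- every other open pair is disjoint from `q`, hence avoids `v`
    have hinv' : ∀ d, (d = q.1 ∨ d = q.2) →
        PairingInvariant M (insert d D) (insert v S) := by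
      intro d hd p hp
      have hpq : p ≠ q := by
        rintro rfl
        obtain ⟨-, h1, h2⟩ := mem_pairsAvoiding.1 hp
        rcases hd with rfl | rfl <;> simp at h1 h2
      have hpD := pairsAvoiding_anti (Finset.subset_insert d D) hp
      have hd := hdisj p (mem_pairsAvoiding.1 hpD).1 q hqM hpq
      obtain ⟨h1, h2⟩ := hinv p hpD
      rcases hvq with rfl | rfl <;> simp_all
    obtain ⟨h1, h2⟩ := hinv q hq
    rcases hvq with rfl | rfl
    · exact ⟨q, hq, q.2, Or.inr rfl, by simp [h2, (hloop q hqM).symm], hinv' _ (Or.inr rfl)⟩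
    · exact ⟨q, hq, q.1, Or.inl rfl, by simp [h1, hloop q hqM], hinv' _ (Or.inl rfl)⟩
  · push Not at hv
    obtain ⟨q, hq⟩ := hopen
    have hinv' : PairingInvariant M D (insert v S) := fun p hp => by
      simp [hinv p hp, Ne.symm (hv p hp).1, Ne.symm (hv p hp).2]
    exact ⟨q, hq, q.1, Or.inl rfl, hinv' q hq |>.1, hinv'.mono (Finset.subset_insert _ _)⟩

variable {G : SimpleGraph V}
    (hadj : ∀ p ∈ M, G.Adj p.1 p.2)
    (hdisj : ∀ p ∈ M, ∀ q ∈ M, p ≠ q → p.1 ≠ q.1 ∧ p.1 ≠ q.2 ∧ p.2 ≠ q.1 ∧ p.2 ≠ q.2)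
    (hperf : ∀ v : V, ∃ p ∈ M, v = p.1 ∨ v = p.2)
include hadj hdisj hperf

theorem domS_of_pairingInvariant {k : ℕ} :
    PairingInvariant M D S → (pairsAvoiding M D).card ≤ k → DomS G k D S := by
  induction k generalizing D S with
  | zero =>
    intro _ hcard
    exact .win <| dominates_of_pairsAvoiding_eq_empty hadj hperf <|
      Finset.card_eq_zero.1 (by omega)
  | succ k ih =>
    intro hinv hcard
    obtain hclosed | hopen := (pairsAvoiding M D).eq_empty_or_nonempty
    · exact .win (dominates_of_pairsAvoiding_eq_empty hadj hperf hclosed)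
    obtain ⟨q, hq⟩ := hopen
    refine .move ⟨q.1, (mem_pairsAvoiding.1 hq).2.1, (hinv q hq).1⟩ fun v _ _ => ?_
    obtain ⟨q', hq', d, hd, hdvS, hinv'⟩ :=
      exists_pairing_reply (fun p hp => (hadj p hp).ne) hdisj hinv ⟨q, hq⟩ v
    have hdD : d ∉ D := by
      obtain ⟨-, h1, h2⟩ := mem_pairsAvoiding.1 hq'
      rcases hd with rfl | rfl <;> assumption
    have := card_pairsAvoiding_insert_lt hq' hd
    exact .move d hdD hdvS (ih hinv' (by omega))

theorem domD_of_pairingInvariant {k : ℕ} (hinv : PairingInvariant M D S)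
    (hcard : (pairsAvoiding M D).card ≤ k) : DomD G k D S := by
  obtain hclosed | ⟨q, hq⟩ := (pairsAvoiding M D).eq_empty_or_nonempty
  · exact .win (dominates_of_pairsAvoiding_eq_empty hadj hperf hclosed)
  have hlt := card_pairsAvoiding_insert_lt hq (Or.inl rfl)
  obtain ⟨k, rfl⟩ : ∃ k', k = k' + 1 := ⟨k - 1, by omega⟩
  exact .move q.1 (mem_pairsAvoiding.1 hq).2.1 (hinv q hq).1
    (domS_of_pairingInvariant hadj hdisj hperf (hinv.mono (Finset.subset_insert _ _))
      (by omega))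

end MBD

/-- If `G` admits a perfect matching `M` (given as a finset of adjacent pairs, pairwise
vertex-disjoint, covering every vertex), then Dominator wins both the D-game and the
S-game on `G`, in each case using at most `|M|` moves. -/
theorem stmt_2 {V : Type*} [Fintype V] [DecidableEq V] (G : SimpleGraph V)
    (M : Finset (V × V))
    (hadj : ∀ p ∈ M, G.Adj p.1 p.2)
    (hdisj : ∀ p ∈ M, ∀ q ∈ M, p ≠ q →
      p.1 ≠ q.1 ∧ p.1 ≠ q.2 ∧ p.2 ≠ q.1 ∧ p.2 ≠ q.2)
    (hperf : ∀ v : V, ∃ p ∈ M, v = p.1 ∨ v = p.2) :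
    MBD.DomD G M.card ∅ ∅ ∧ MBD.DomS G M.card ∅ ∅ :=
  ⟨MBD.domD_of_pairingInvariant hadj hdisj hperf MBD.pairingInvariant_empty (by simp),
    MBD.domS_of_pairingInvariant hadj hdisj hperf MBD.pairingInvariant_empty (by simp)⟩
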